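/- arXiv:1804.03355 — 4 statements merged into one kernel-verified Lean document; each statement's English description precedes it below -/
import Mathlib

section
/- Let λ > 0 and t₀ = (i-1)/n. With S as the continuous interpolation of resolvent products, ∫_{t₀}^{1} S(s)² ds ≤ (1/(λ+n)) ∑_{κ=i}^{n} (1+λ/n)^{-2(κ-i)} ≤ 2/λ. -/
/-!
On a grid `t 0 ≤ t 1 ≤ ⋯`, the `k`-th factor of the product `S` is `1` to the left of
`[t k, t (k+1)]`, is `(1 + l (s - t k))⁻¹` on it and is the full resolvent factor to its right. So on
the `k`-th cell `S` is a product of `k` full factors times one varying factor, and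
`∫_{t k}^{t k + h} (1 + l (s - t k))⁻² ds = h / (1 + l h)`. For the uniform step `h = 1/n` this gives
the integral exactly, and the geometric series in `(1 + l h)⁻²` sums to at most
`(1 + l h)² / (l h (2 + l h))`, so the total is at most `(1 + l h) / (l (2 + l h)) ≤ 1 / l`.
-/

open Finset intervalIntegral

theorem integral_inv_one_add_mul_sub_sq {l a b : ℝ} (hl : 0 ≤ l) (hab : a ≤ b) :
    ∫ s in a..b, ((1 + l * (s - a))⁻¹) ^ 2 = (b - a) / (1 + l * (b - a)) := by
  have hpos : ∀ s ∈ Set.uIcc a b, 0 < 1 + l * (s - a) := by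
    intro s hs
    rw [Set.uIcc_of_le hab] at hs
    nlinarith [mul_nonneg hl (sub_nonneg.2 hs.1)]
  -- this antiderivative, unlike `-(1 + l (s - a))⁻¹ / l`, also covers `l = 0`
  have hderiv : ∀ s ∈ Set.uIcc a b,
      HasDerivAt (fun x => (x - a) / (1 + l * (x - a))) (((1 + l * (s - a))⁻¹) ^ 2) s := by
    intro s hs
    have hsub : HasDerivAt (fun x => x - a) 1 s := (hasDerivAt_id s).sub_const a
    have hne := (hpos s hs).ne'
    refine (hsub.div ((hsub.const_mul l).const_add 1) hne).congr_deriv ?_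
    field_simp
    ring
  have hcont : ContinuousOn (fun s => ((1 + l * (s - a))⁻¹) ^ 2) (Set.uIcc a b) :=
    ((ContinuousOn.inv₀ (by fun_prop) fun s hs => (hpos s hs).ne').pow 2)
  rw [integral_eq_sub_of_hasDerivAt hderiv hcont.intervalIntegrable]
  simp

noncomputable def resolventProd (l : ℝ) (t : ℕ → ℝ) (N : ℕ) (s : ℝ) : ℝ :=
  ∏ k ∈ range N, (1 + l * (min s (t (k + 1)) - min s (t k)))⁻¹

section
variable {l : ℝ} {t : ℕ → ℝ}

theorem continuous_resolventProd (hl : 0 ≤ l) (ht : Monotone t) (N : ℕ) :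
    Continuous (resolventProd l t N) := by
  refine continuous_finsetProd _ fun k _ => Continuous.inv₀ (by fun_prop) fun s => ?_
  have : min s (t k) ≤ min s (t (k + 1)) := min_le_min_left s (ht k.le_succ)
  nlinarith [mul_nonneg hl (sub_nonneg.2 this)]

theorem resolventProd_eq_of_mem_Icc (ht : Monotone t) {N k : ℕ} (hk : k < N) {s : ℝ}
    (hs : s ∈ Set.Icc (t k) (t (k + 1))) :
    resolventProd l t N s =
      (∏ j ∈ range k, (1 + l * (t (j + 1) - t j))⁻¹) * (1 + l * (s - t k))⁻¹ := by
  rw [resolventProd, ← prod_range_mul_prod_Ico _ (Nat.succ_le_of_lt hk), prod_range_succ]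
  have hbefore : ∀ j ∈ range k, (1 + l * (min s (t (j + 1)) - min s (t j)))⁻¹ =
      (1 + l * (t (j + 1) - t j))⁻¹ := by
    intro j hj
    have hj : t (j + 1) ≤ s := (ht (mem_range.1 hj)).trans hs.1
    rw [min_eq_right hj, min_eq_right ((ht j.le_succ).trans hj)]
  have hafter : ∀ j ∈ Ico (k + 1) N, (1 + l * (min s (t (j + 1)) - min s (t j)))⁻¹ = 1 := by
    intro j hj
    have hj : s ≤ t j := hs.2.trans (ht (mem_Ico.1 hj).1)
    rw [min_eq_left hj, min_eq_left (hj.trans (ht j.le_succ))]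
    simp
  rw [prod_congr rfl hbefore, prod_eq_one hafter, min_eq_left hs.2, min_eq_right hs.1, mul_one]

theorem integral_resolventProd_sq (hl : 0 ≤ l) (ht : Monotone t) (N : ℕ) :
    ∫ s in t 0..t N, resolventProd l t N s ^ 2 =
      ∑ k ∈ range N, (∏ j ∈ range k, (1 + l * (t (j + 1) - t j))⁻¹) ^ 2 *
        ((t (k + 1) - t k) / (1 + l * (t (k + 1) - t k))) := by
  rw [← sum_integral_adjacent_intervals (f := fun s => resolventProd l t N s ^ 2) fun k _ =>
    ((continuous_resolventProd hl ht N).pow 2).intervalIntegrable _ _]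
  refine sum_congr rfl fun k hk => ?_
  rw [← integral_inv_one_add_mul_sub_sq hl (ht k.le_succ), ← integral_const_mul]
  refine integral_congr fun s hs => ?_
  rw [Set.uIcc_of_le (ht k.le_succ)] at hs
  simp only [resolventProd_eq_of_mem_Icc ht (mem_range.1 hk) hs, mul_pow]

theorem integral_resolventProd_sq_of_step {h : ℝ} (hl : 0 ≤ l) (hh : 0 ≤ h)
    (ht : ∀ k, t (k + 1) = t k + h) (N : ℕ) :
    ∫ s in t 0..t N, resolventProd l t N s ^ 2 =
      h / (1 + l * h) * ∑ k ∈ range N, ((1 + l * h)⁻¹) ^ (2 * k) := by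
  have hmono : Monotone t := monotone_nat_of_le_succ fun k => by rw [ht k]; linarith
  simp only [integral_resolventProd_sq hl hmono, ht, add_sub_cancel_left, prod_const,
    card_range, mul_sum]
  refine sum_congr rfl fun k _ => ?_
  rw [pow_mul, ← pow_mul, mul_comm k 2, pow_mul]
  ring

end

theorem mul_geom_sum_inv_one_add_mul_sq_le {l h : ℝ} (hl : 0 < l) (hh : 0 < h) (N : ℕ) :
    h / (1 + l * h) * ∑ k ∈ range N, ((1 + l * h)⁻¹) ^ (2 * k) ≤ 1 / l := by
  have hlh : 0 < l * h := mul_pos hl hh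
  set q := ((1 + l * h)⁻¹) ^ 2 with hq
  have hq1 : q < 1 := by
    rw [hq, inv_pow]; exact inv_lt_one_of_one_lt₀ (by nlinarith)
  have hgeom : ∑ k ∈ range N, q ^ k ≤ (1 - q)⁻¹ := by
    simpa [← range_eq_Ico] using geom_sum_Ico_le_of_lt_one (m := 0) (n := N) (by positivity) hq1
  simp only [pow_mul, ← hq]
  calc h / (1 + l * h) * ∑ k ∈ range N, q ^ k ≤ h / (1 + l * h) * (1 - q)⁻¹ :=
        mul_le_mul_of_nonneg_left hgeom (by positivity)
    _ = (1 + l * h) / (l * (2 + l * h)) := by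
        have hne : 1 + l * h ≠ 0 := by positivity
        have hsub : 1 - q = l * h * (2 + l * h) / (1 + l * h) ^ 2 := by
          rw [hq]; field_simp; ring
        rw [hsub]; field_simp
    _ ≤ 1 / l := by
        rw [div_le_div_iff₀ (by positivity) hl]; nlinarith

theorem stmt_7_general (l : ℝ) (hl : 0 < l) (n i : ℕ) (hn : 0 < n)
    (hin : i ≤ n) :
    ((∫ s in (((i : ℝ) - 1) / n)..1,
        (∏ κ ∈ Finset.Icc i n,
            (1 + l * (min s ((κ : ℝ) / n) - min s (((κ : ℝ) - 1) / n)))⁻¹) ^ 2)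
      ≤ (1 / (l + n)) * ∑ κ ∈ Finset.Icc i n, ((1 + l / n)⁻¹) ^ (2 * (κ - i))) ∧
    (1 / (l + n)) * ∑ κ ∈ Finset.Icc i n, ((1 + l / n)⁻¹) ^ (2 * (κ - i)) ≤ 2 / l := by
  have hn' : (0 : ℝ) < n := by exact_mod_cast hn
  set t : ℕ → ℝ := fun k => ((i : ℝ) - 1 + k) / n with ht
  have hstep : ∀ k, t (k + 1) = t k + 1 / n := fun k => by simp only [ht]; push_cast; ring
  have hprod : ∀ s, ∏ κ ∈ Icc i n, (1 + l * (min s ((κ : ℝ) / n) - min s (((κ : ℝ) - 1) / n)))⁻¹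
      = resolventProd l t (n + 1 - i) s := fun s => by
    rw [← Ico_add_one_right_eq_Icc, prod_Ico_eq_prod_range, resolventProd]
    refine prod_congr rfl fun k _ => ?_
    simp only [ht]; push_cast; ring_nf
  have hsum : ∑ κ ∈ Icc i n, ((1 + l / n)⁻¹) ^ (2 * (κ - i))
      = ∑ k ∈ range (n + 1 - i), ((1 + l * (1 / n))⁻¹) ^ (2 * k) := by
    rw [← Ico_add_one_right_eq_Icc, sum_Ico_eq_sum_range]
    simp [div_eq_mul_inv]
  have hcoef : 1 / (l + n) = 1 / n / (1 + l * (1 / n)) := by field_simp; ring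
  have ht0 : t 0 = ((i : ℝ) - 1) / n := by simp [ht]
  have htN : t (n + 1 - i) = 1 := by
    simp only [ht]; rw [Nat.cast_sub (by omega)]; push_cast; field_simp; ring
  have hintegral := integral_resolventProd_sq_of_step hl.le (by positivity) hstep (n + 1 - i)
  rw [ht0, htN] at hintegral
  simp only [hprod, hsum, hcoef]
  refine ⟨hintegral.le, ?_⟩
  calc _ ≤ 1 / l := mul_geom_sum_inv_one_add_mul_sq_le hl (by positivity) _
    _ ≤ 2 / l := by gcongr; norm_num

theorem stmt_7 (l : ℝ) (hl : 0 < l) (n i : ℕ) (hn : 0 < n)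
    (hi : 1 ≤ i) (hin : i ≤ n) :
    ((∫ s in (((i : ℝ) - 1) / n)..1,
        (∏ κ ∈ Finset.Icc i n,
            (1 + l * (min s ((κ : ℝ) / n) - min s (((κ : ℝ) - 1) / n)))⁻¹) ^ 2)
      ≤ (1 / (l + n)) * ∑ κ ∈ Finset.Icc i n, ((1 + l / n)⁻¹) ^ (2 * (κ - i))) ∧
    (1 / (l + n)) * ∑ κ ∈ Finset.Icc i n, ((1 + l / n)⁻¹) ^ (2 * (κ - i)) ≤ 2 / l :=
  stmt_7_general l hl n i hn hin
end

section
/- Let λ > 0 and let 0 = τ₀ < ... < τ_N = 1 be a partition refining the uniform grid {0, 1/n, ..., 1} (i.e., each k/n is some τ_η). For 1 ≤ i ≤ n, ∑_{η : i/n ≤ τ_η ≤ 1} (∏_{ν : τ_ν ∈ ((i-1)/n, τ_η]} (1+λ(τ_ν - τ_{ν-1}))^{-1})² (τ_η - τ_{η-1}) ≤ 2/λ. -/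
/-!
Write `G η` for the squared product in the `η`-th term and `a = 1 + λ (τ η - τ (η - 1))`.
Whenever the `η`-th factor is present, `G η = G (η - 1) / a²`, so
`2λ (τ η - τ (η - 1)) G η = 2 (a - 1) G (η - 1) / a²`
`≤ (1 - 1 / a²) G (η - 1) = G (η - 1) - G η`.
Since `G` is nonincreasing, the sum telescopes to at most `(G 0 - G N) / (2λ) ≤ 1 / (2λ)`.
-/

open Finset

theorem two_mul_mul_inv_one_add_sq_le {t : ℝ} (ht : 0 ≤ t) :
    2 * t * (1 + t)⁻¹ ^ 2 ≤ 1 - (1 + t)⁻¹ ^ 2 := by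
  have h : 0 < 1 + t := by linarith
  rw [inv_pow, ← div_eq_mul_inv, ← one_div, one_sub_div (by positivity),
    div_le_div_iff_of_pos_right (by positivity)]
  nlinarith [sq_nonneg t]

theorem sum_Icc_one_pred_sub_telescope (g : ℕ → ℝ) (N : ℕ) :
    ∑ η ∈ Icc 1 N, (g (η - 1) - g η) = g 0 - g N := by
  induction N with
  | zero => simp
  | succ m ih =>
    rw [sum_Icc_succ_top (by omega), ih, Nat.add_sub_cancel]
    ring

theorem sum_le_sub_of_le_sub_of_subset_Icc {N : ℕ} {T : Finset ℕ} (hT : T ⊆ Icc 1 N)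
    {u g : ℕ → ℝ} (hg : ∀ η ∈ Icc 1 N, g η ≤ g (η - 1))
    (hu : ∀ η ∈ T, u η ≤ g (η - 1) - g η) :
    ∑ η ∈ T, u η ≤ g 0 - g N :=
  calc ∑ η ∈ T, u η ≤ ∑ η ∈ T, (g (η - 1) - g η) := sum_le_sum hu
    _ ≤ ∑ η ∈ Icc 1 N, (g (η - 1) - g η) :=
      sum_le_sum_of_subset_of_nonneg hT fun η hη _ => sub_nonneg.2 (hg η hη)
    _ = g 0 - g N := sum_Icc_one_pred_sub_telescope g N

theorem prod_filter_Icc_of_pos {M : Type*} [CommMonoid M] (p : ℕ → Prop) [DecidablePred p]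
    (f : ℕ → M) {η : ℕ} (hη : 1 ≤ η) :
    ∏ ν ∈ (Icc 1 η).filter p, f ν
      = (if p η then f η else 1) * ∏ ν ∈ (Icc 1 (η - 1)).filter p, f ν := by
  obtain ⟨m, rfl⟩ := Nat.exists_eq_add_of_le' hη
  rw [prod_filter, prod_filter, prod_Icc_succ_top (by omega), mul_comm, Nat.add_sub_cancel]

theorem sum_sq_prod_filter_inv_one_add_mul_le {l : ℝ} (hl : 0 < l) {x : ℕ → ℝ} {N : ℕ}
    (hx : ∀ ν ∈ Icc 1 N, 0 ≤ x ν) (p : ℕ → Prop) [DecidablePred p] {T : Finset ℕ}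
    (hT : T ⊆ (Icc 1 N).filter p) :
    ∑ η ∈ T, (∏ ν ∈ (Icc 1 η).filter p, (1 + l * x ν)⁻¹) ^ 2 * x η ≤ 1 / (2 * l) := by
  set G : ℕ → ℝ := fun η => (∏ ν ∈ (Icc 1 η).filter p, (1 + l * x ν)⁻¹) ^ 2
  have hG_step : ∀ η ∈ Icc 1 N,
      G η = (if p η then (1 + l * x η)⁻¹ ^ 2 else 1) * G (η - 1) := by
    intro η hη
    simp only [G]
    rw [prod_filter_Icc_of_pos p _ (mem_Icc.1 hη).1, mul_pow, apply_ite (· ^ 2), one_pow]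
  have hG_nonneg : ∀ η, 0 ≤ G η := fun η => sq_nonneg _
  have hG_mono : ∀ η ∈ Icc 1 N, G η ≤ G (η - 1) := by
    intro η hη
    have ht : 0 ≤ l * x η := mul_nonneg hl.le (hx η hη)
    have hc : (1 + l * x η)⁻¹ ^ 2 ≤ 1 :=
      pow_le_one₀ (by positivity) (inv_le_one_of_one_le₀ (by linarith))
    rw [hG_step η hη]
    split_ifs
    · exact mul_le_of_le_one_left (hG_nonneg _) hc
    · rw [one_mul]
  have hG_drop : ∀ η ∈ T, 2 * l * (G η * x η) ≤ G (η - 1) - G η := by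
    intro η hη
    obtain ⟨hηN, hpη⟩ := mem_filter.1 (hT hη)
    have key := two_mul_mul_inv_one_add_sq_le (mul_nonneg hl.le (hx η hηN))
    rw [hG_step η hηN, if_pos hpη]
    nlinarith [hG_nonneg (η - 1)]
  have hsum :=
    sum_le_sub_of_le_sub_of_subset_Icc (hT.trans (filter_subset _ _)) hG_mono hG_drop
  rw [← mul_sum] at hsum
  rw [le_div_iff₀ (by positivity)]
  have hG0 : G 0 = 1 := by simp [G]
  linarith [hG_nonneg N]

theorem stmt_9_general (l : ℝ) (hl : 0 < l) (n N : ℕ) (hn : 0 < n) (τ : ℕ → ℝ)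
    (hmono : ∀ ν < N, τ ν < τ (ν + 1))
    (i : ℕ) :
    ∑ η ∈ (Finset.Icc 1 N).filter (fun η => (i : ℝ) / n ≤ τ η),
        (∏ ν ∈ (Finset.Icc 1 η).filter (fun ν => ((i : ℝ) - 1) / n < τ ν),
            (1 + l * (τ ν - τ (ν - 1)))⁻¹) ^ 2 * (τ η - τ (η - 1))
      ≤ 2 / l := by
  have hstep : ∀ ν ∈ Icc 1 N, 0 ≤ τ ν - τ (ν - 1) := by
    intro ν hν
    obtain ⟨h1, hN⟩ := mem_Icc.1 hν
    have := hmono (ν - 1) (by omega)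
    rw [Nat.sub_add_cancel h1] at this
    linarith
  have hsub : (Icc 1 N).filter (fun η => (i : ℝ) / n ≤ τ η)
      ⊆ (Icc 1 N).filter (fun ν => ((i : ℝ) - 1) / n < τ ν) :=
    monotone_filter_right _ fun _ _ hη => lt_of_lt_of_le
      (div_lt_div_of_pos_right (sub_one_lt (i : ℝ)) (Nat.cast_pos.2 hn)) hη
  calc _ ≤ 1 / (2 * l) := sum_sq_prod_filter_inv_one_add_mul_le hl hstep _ hsub
    _ ≤ 2 / l := by rw [div_le_div_iff₀ (by positivity) hl]; linarith

theorem stmt_9 (l : ℝ) (hl : 0 < l) (n N : ℕ) (hn : 0 < n) (τ : ℕ → ℝ)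
    (hτ0 : τ 0 = 0) (hτN : τ N = 1) (hmono : ∀ ν < N, τ ν < τ (ν + 1))
    (href : ∀ k ≤ n, ∃ η ≤ N, τ η = (k : ℝ) / n)
    (i : ℕ) (hi : 1 ≤ i) (hin : i ≤ n) :
    ∑ η ∈ (Finset.Icc 1 N).filter (fun η => (i : ℝ) / n ≤ τ η),
        (∏ ν ∈ (Finset.Icc 1 η).filter (fun ν => ((i : ℝ) - 1) / n < τ ν),
            (1 + l * (τ ν - τ (ν - 1)))⁻¹) ^ 2 * (τ η - τ (η - 1))
      ≤ 2 / l :=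
  stmt_9_general l hl n N hn τ hmono i
end

section
/- Let λ > 0, ξ ∈ ℝ, and 0 = τ₀ < ... < τ_N = 1 a partition of [0,1]. Then ∑_{η=1}^{N} λ · (∏_{ν=1}^{η} (1+λ(τ_ν - τ_{ν-1}))^{-1})² · ξ² · (τ_η - τ_{η-1}) ≤ 2 ξ². -/
/-!
With `x ν = λ (τ ν - τ (ν - 1)) ≥ 0` and `P η = ∏_{ν ≤ η} (1 + x ν)⁻¹`, one has
`P η = P (η - 1) / (1 + x η)`, hence `x η * P η ^ 2 ≤ P (η - 1) ^ 2 - P η ^ 2`.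
The sum therefore telescopes to at most `P 0 ^ 2 - P N ^ 2 ≤ 1`.
-/

open Finset

lemma mul_sq_mul_inv_one_add_le {x : ℝ} (hx : 0 ≤ x) (p : ℝ) :
    x * (p * (1 + x)⁻¹) ^ 2 ≤ p ^ 2 - (p * (1 + x)⁻¹) ^ 2 := by
  have hpos : 0 < 1 + x := by linarith
  calc x * (p * (1 + x)⁻¹) ^ 2 = p ^ 2 * (1 + x)⁻¹ - (p * (1 + x)⁻¹) ^ 2 := by
        field_simp; ring
    _ ≤ p ^ 2 - (p * (1 + x)⁻¹) ^ 2 := by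
        gcongr
        exact mul_le_of_le_one_right (sq_nonneg p) (inv_le_one_of_one_le₀ (by linarith))

lemma sum_mul_sq_prod_inv_one_add_le_one_sub (x : ℕ → ℝ) (N : ℕ)
    (hx : ∀ ν ∈ Icc 1 N, 0 ≤ x ν) :
    ∑ η ∈ Icc 1 N, x η * (∏ ν ∈ Icc 1 η, (1 + x ν)⁻¹) ^ 2
      ≤ 1 - (∏ ν ∈ Icc 1 N, (1 + x ν)⁻¹) ^ 2 := by
  induction N with
  | zero => simp
  | succ N ih =>
    have hxN : 0 ≤ x (N + 1) := hx (N + 1) (by simp)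
    rw [sum_Icc_succ_top (by omega), prod_Icc_succ_top (by omega)]
    have := ih fun ν hν => hx ν (Icc_subset_Icc_right N.le_succ hν)
    linarith [mul_sq_mul_inv_one_add_le hxN (∏ ν ∈ Icc 1 N, (1 + x ν)⁻¹)]

theorem stmt_10_general (l ξ : ℝ) (hl : 0 < l) (N : ℕ) (τ : ℕ → ℝ)
    (hmono : ∀ ν < N, τ ν < τ (ν + 1)) :
    ∑ η ∈ Finset.Icc 1 N,
        l * (∏ ν ∈ Finset.Icc 1 η, (1 + l * (τ ν - τ (ν - 1)))⁻¹) ^ 2 * ξ ^ 2 *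
          (τ η - τ (η - 1))
      ≤ 2 * ξ ^ 2 := by
  set x : ℕ → ℝ := fun ν => l * (τ ν - τ (ν - 1))
  have hx : ∀ ν ∈ Icc 1 N, 0 ≤ x ν := by
    intro ν hν
    obtain ⟨h1, h2⟩ := mem_Icc.mp hν
    have := hmono (ν - 1) (by omega)
    rw [Nat.sub_add_cancel h1] at this
    exact mul_nonneg hl.le (by linarith)
  have hsum := sum_mul_sq_prod_inv_one_add_le_one_sub x N hx
  calc _ = ξ ^ 2 * ∑ η ∈ Icc 1 N, x η * (∏ ν ∈ Icc 1 η, (1 + x ν)⁻¹) ^ 2 := by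
        rw [mul_sum]; congr! 1 with η; ring
    _ ≤ ξ ^ 2 * 1 := by gcongr; linarith [sq_nonneg (∏ ν ∈ Icc 1 N, (1 + x ν)⁻¹)]
    _ ≤ 2 * ξ ^ 2 := by linarith [sq_nonneg ξ]

theorem stmt_10 (l ξ : ℝ) (hl : 0 < l) (N : ℕ) (τ : ℕ → ℝ)
    (hτ0 : τ 0 = 0) (hτN : τ N = 1) (hmono : ∀ ν < N, τ ν < τ (ν + 1)) :
    ∑ η ∈ Finset.Icc 1 N,
        l * (∏ ν ∈ Finset.Icc 1 η, (1 + l * (τ ν - τ (ν - 1)))⁻¹) ^ 2 * ξ ^ 2 *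
          (τ η - τ (η - 1))
      ≤ 2 * ξ ^ 2 :=
  stmt_10_general l ξ hl N τ hmono
end

section
/- Let λ > 0 and let 0 = t₀ < t₁ < ... < t_n = 1 be a grid with max step δmax and min step δmin satisfying δmax/δmin ≤ c for some c ≥ 1. Then ∑_{η=i}^{n} (∏_{ν=i}^{η} (1+λ(t_ν - t_{ν-1}))^{-1})² (t_η - t_{η-1}) ≤ 2c/λ for every 1 ≤ i ≤ n. -/
/-! Write `δ_ν = t ν - t (ν - 1)` and `q η = ∏_{ν=i}^{η} (1 + l δ_ν)⁻¹`. Since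
`q η (1 + l δ_η) = q (η - 1)`, the sum `∑ q η · l δ_η` telescopes to `1 - q n ≤ 1`; as
`0 ≤ q η ≤ 1`, squaring `q η` only makes each term smaller, so the sum in question is at most
`1/l ≤ 2c/l`. -/

open Finset

theorem sum_Icc_prod_inv_one_add_mul_eq {K : Type*} [Field K] (a : ℕ → K) (i m : ℕ)
    (ha : ∀ ν ∈ Icc i m, 1 + a ν ≠ 0) :
    ∑ η ∈ Icc i m, (∏ ν ∈ Icc i η, (1 + a ν)⁻¹) * a η
      = 1 - ∏ ν ∈ Icc i m, (1 + a ν)⁻¹ := by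
  rcases lt_or_ge m i with hmi | him
  · simp [Icc_eq_empty_of_lt hmi]
  induction m, him using Nat.le_induction with
  | base =>
    have h : 1 + a i ≠ 0 := ha i (by simp)
    simp only [Icc_self, sum_singleton, prod_singleton]
    field_simp
    ring
  | succ m him ih =>
    have h : 1 + a (m + 1) ≠ 0 := ha _ (mem_Icc.2 ⟨by omega, le_rfl⟩)
    rw [sum_Icc_succ_top (by omega), prod_Icc_succ_top (by omega),
      ih fun ν hν => ha ν (Icc_subset_Icc_right (by omega) hν)]
    field_simp
    ring

section Ordered

variable {K : Type*} [Field K] [LinearOrder K] [IsStrictOrderedRing K]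

theorem prod_inv_one_add_nonneg {ι : Type*} {s : Finset ι} {a : ι → K}
    (ha : ∀ ν ∈ s, 0 ≤ a ν) : 0 ≤ ∏ ν ∈ s, (1 + a ν)⁻¹ :=
  prod_nonneg fun ν hν => by have := ha ν hν; positivity

theorem prod_inv_one_add_le_one {ι : Type*} {s : Finset ι} {a : ι → K}
    (ha : ∀ ν ∈ s, 0 ≤ a ν) : ∏ ν ∈ s, (1 + a ν)⁻¹ ≤ 1 :=
  prod_le_one (fun ν hν => by have := ha ν hν; positivity)
    fun ν hν => inv_le_one_of_one_le₀ (le_add_of_nonneg_right (ha ν hν))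

theorem mul_sum_Icc_sq_prod_inv_one_add_mul_le_one {l : K} (hl : 0 ≤ l) {d : ℕ → K}
    {i m : ℕ} (hd : ∀ ν ∈ Icc i m, 0 ≤ d ν) :
    l * ∑ η ∈ Icc i m, (∏ ν ∈ Icc i η, (1 + l * d ν)⁻¹) ^ 2 * d η ≤ 1 := by
  have hld : ∀ ν ∈ Icc i m, 0 ≤ l * d ν := fun ν hν => mul_nonneg hl (hd ν hν)
  have hsub : ∀ η ∈ Icc i m, ∀ ν ∈ Icc i η, 0 ≤ l * d ν := fun η hη ν hν =>
    hld ν (Icc_subset_Icc_right (mem_Icc.1 hη).2 hν)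
  calc l * ∑ η ∈ Icc i m, (∏ ν ∈ Icc i η, (1 + l * d ν)⁻¹) ^ 2 * d η
      ≤ ∑ η ∈ Icc i m, (∏ ν ∈ Icc i η, (1 + l * d ν)⁻¹) * (l * d η) := by
        rw [mul_sum]
        refine sum_le_sum fun η hη => ?_
        have hq₀ := prod_inv_one_add_nonneg (hsub η hη)
        have hq₁ := prod_inv_one_add_le_one (hsub η hη)
        rw [mul_left_comm, sq]
        exact mul_le_mul_of_nonneg_right (mul_le_of_le_one_left hq₀ hq₁) (hld η hη)
    _ = 1 - ∏ ν ∈ Icc i m, (1 + l * d ν)⁻¹ :=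
        sum_Icc_prod_inv_one_add_mul_eq _ _ _ fun ν hν => by have := hld ν hν; positivity
    _ ≤ 1 := sub_le_self _ (prod_inv_one_add_nonneg hld)

end Ordered

theorem stmt_15_general (l c : ℝ) (hl : 0 < l) (hc : 1 ≤ c) (n : ℕ)
    (t : ℕ → ℝ)
    (hmono : ∀ ν < n, t ν < t (ν + 1))
    (i : ℕ) :
    ∑ η ∈ Finset.Icc i n,
        (∏ ν ∈ Finset.Icc i η, (1 + l * (t ν - t (ν - 1)))⁻¹) ^ 2 * (t η - t (η - 1))
      ≤ 2 * c / l := by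
  have hstep : ∀ ν ∈ Icc i n, 0 ≤ t ν - t (ν - 1) := by
    rintro (_ | ν) hν
    · simp
    · simpa using (hmono ν (mem_Icc.1 hν).2).le
  calc _ ≤ 1 / l := by
        rw [le_div_iff₀' hl]
        exact mul_sum_Icc_sq_prod_inv_one_add_mul_le_one hl.le hstep
    _ ≤ 2 * c / l := by gcongr; linarith

theorem stmt_15 (l c : ℝ) (hl : 0 < l) (hc : 1 ≤ c) (n : ℕ) (hn : 0 < n)
    (t : ℕ → ℝ) (ht0 : t 0 = 0) (htn : t n = 1)
    (hmono : ∀ ν < n, t ν < t (ν + 1))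
    (hquasi : ∀ ν ∈ Finset.Icc 1 n, ∀ μ ∈ Finset.Icc 1 n,
      t ν - t (ν - 1) ≤ c * (t μ - t (μ - 1)))
    (i : ℕ) (hi : 1 ≤ i) (hin : i ≤ n) :
    ∑ η ∈ Finset.Icc i n,
        (∏ ν ∈ Finset.Icc i η, (1 + l * (t ν - t (ν - 1)))⁻¹) ^ 2 * (t η - t (η - 1))
      ≤ 2 * c / l :=
  stmt_15_general l c hl hc n t hmono i
end
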